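/- arXiv:2005.08808 — 3 statements merged into one kernel-verified Lean document; each statement's English description precedes it below -/
import Mathlib

section
/- Let σ > 0 and μ_z, μ_w ∈ ℝ, let ν = √(μ_z² + μ_w²), and let Z and W be independent real random variables with Z distributed as N(μ_z, σ²) and W distributed as N(μ_w, σ²). Then the random variable d = √(Z² + W²) has law absolutely continuous with respect to Lebesgue measure on (0, ∞), with density f_d(s) = (s / (2πσ²)) · exp(−(s² + ν²) / (2σ²)) · ∫_{−π}^{π} exp((s·ν / σ²) · cos u) du for s > 0; that is, d follows the Rice(ν, σ) distribution, where the modified Bessel function I₀(x) is written explicitly as (1/(2π)) ∫_{−π}^{π} e^{x cos u} du. -/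
/-!
The pair `(Z, W)` has the product of the two Gaussian densities as its density on `ℝ²`. In polar
coordinates `(s cos θ, s sin θ)` the Jacobian contributes the factor `s`, and writing the mean as
`(ν cos φ, ν sin φ)` the exponent becomes `-(s² + ν²)/(2σ²) + (sν/σ²) cos (θ - φ)`. Integrating
`θ` over a full period removes the phase `φ`, leaving the Rice density.
-/

open MeasureTheory ProbabilityTheory Set
open scoped Real ENNReal NNReal

lemma exists_eq_sqrt_mul_cos_sin (a b : ℝ) :
    ∃ φ, a = √(a ^ 2 + b ^ 2) * Real.cos φ ∧ b = √(a ^ 2 + b ^ 2) * Real.sin φ := by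
  have hnorm : ‖(⟨a, b⟩ : ℂ)‖ = √(a ^ 2 + b ^ 2) := by
    rw [Complex.norm_def, Complex.normSq_mk]; ring_nf
  exact ⟨Complex.arg ⟨a, b⟩, by rw [← hnorm, Complex.norm_mul_cos_arg],
    by rw [← hnorm, Complex.norm_mul_sin_arg]⟩

theorem Function.Periodic.intervalIntegral_comp_sub_eq {E : Type*} [NormedAddCommGroup E]
    [NormedSpace ℝ E] {F : ℝ → E} {T : ℝ} (hF : Function.Periodic F T) (a c : ℝ) :
    ∫ x in a..a + T, F (x - c) = ∫ x in a..a + T, F x := by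
  rw [intervalIntegral.integral_comp_sub_right, add_sub_right_comm]
  exact hF.intervalIntegral_add_eq (a - c) a

lemma map_sqrt_sq_add_sq_withDensity {g : ℝ × ℝ → ℝ≥0∞} (hg : Measurable g) :
    (volume.withDensity g).map (fun p => √(p.1 ^ 2 + p.2 ^ 2))
      = (volume.restrict (Ioi 0)).withDensity
          (fun s => ENNReal.ofReal s * ∫⁻ θ in Ioo (-π) π, g (s * Real.cos θ, s * Real.sin θ)) := by
  set r : ℝ × ℝ → ℝ := fun p => √(p.1 ^ 2 + p.2 ^ 2)
  have hr : Measurable r := by fun_prop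
  have hr_polar : ∀ s θ : ℝ, 0 < s → r (polarCoord.symm (s, θ)) = s := fun s θ hs => by
    simp only [r, polarCoord_symm_apply, mul_pow, ← mul_add, Real.cos_sq_add_sin_sq, mul_one,
      Real.sqrt_sq hs.le]
  have htarget : polarCoord.target = Ioi 0 ×ˢ Ioo (-π) π := rfl
  ext A hA
  have hmeas : Measurable fun p : ℝ × ℝ =>
      ENNReal.ofReal p.1 • (r ⁻¹' A).indicator g (polarCoord.symm p) :=
    measurable_fst.ennreal_ofReal.smul
      ((hg.indicator (hr hA)).comp continuous_polarCoord_symm.measurable)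
  rw [Measure.map_apply hr hA, withDensity_apply _ (hr hA), withDensity_apply _ hA,
    ← lintegral_indicator (hr hA), ← lintegral_comp_polarCoord_symm, htarget,
    Measure.volume_eq_prod, ← Measure.prod_restrict,
    lintegral_prod _ hmeas.aemeasurable, ← lintegral_indicator hA]
  refine setLIntegral_congr_fun measurableSet_Ioi fun s hs => ?_
  by_cases hsA : s ∈ A
  · simp only [indicator_of_mem hsA, ← lintegral_const_mul' _ _ ENNReal.ofReal_ne_top]
    refine lintegral_congr fun θ => ?_
    rw [indicator_of_mem (by rwa [mem_preimage, hr_polar s θ hs])]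
    rfl
  · rw [indicator_of_notMem hsA]
    refine (lintegral_congr fun θ => ?_).trans lintegral_zero
    rw [indicator_of_notMem (by rwa [mem_preimage, hr_polar s θ hs]), smul_zero]

lemma gaussianPDFReal_mul_gaussianPDFReal_polar (v : ℝ≥0) (ν φ s θ : ℝ) :
    gaussianPDFReal (ν * Real.cos φ) v (s * Real.cos θ) *
        gaussianPDFReal (ν * Real.sin φ) v (s * Real.sin θ)
      = (2 * π * v)⁻¹ * Real.exp (-((s ^ 2 + ν ^ 2) / (2 * v))) *
          Real.exp (s * ν / v * Real.cos (θ - φ)) := by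
  have hsqrt : (√(2 * π * v))⁻¹ * (√(2 * π * v))⁻¹ = (2 * π * v)⁻¹ := by
    rw [← mul_inv, Real.mul_self_sqrt (by positivity)]
  have hexp : -(s * Real.cos θ - ν * Real.cos φ) ^ 2 / (2 * v)
        + -(s * Real.sin θ - ν * Real.sin φ) ^ 2 / (2 * v)
      = -((s ^ 2 + ν ^ 2) / (2 * v)) + s * ν / v * Real.cos (θ - φ) := by
    rw [Real.cos_sub]
    linear_combination (-(s ^ 2) / (2 * v)) * Real.cos_sq_add_sin_sq θ
      + (-(ν ^ 2) / (2 * v)) * Real.cos_sq_add_sin_sq φ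
  simp only [gaussianPDFReal]
  rw [mul_mul_mul_comm, hsqrt, ← Real.exp_add, hexp, Real.exp_add, ← mul_assoc]

lemma lintegral_gaussianPDF_mul_gaussianPDF_polar (v : ℝ≥0) (ν φ s : ℝ) :
    ∫⁻ θ in Ioo (-π) π, gaussianPDF (ν * Real.cos φ) v (s * Real.cos θ) *
        gaussianPDF (ν * Real.sin φ) v (s * Real.sin θ)
      = ENNReal.ofReal ((2 * π * v)⁻¹ * Real.exp (-((s ^ 2 + ν ^ 2) / (2 * v))) *
          ∫ u in (-π)..π, Real.exp (s * ν / v * Real.cos u)) := by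
  have hperiodic : Function.Periodic (fun u => Real.exp (s * ν / v * Real.cos u)) (2 * π) :=
    fun u => by simp only [Real.cos_add_two_pi]
  simp only [gaussianPDF, ← ENNReal.ofReal_mul (gaussianPDFReal_nonneg _ _ _),
    gaussianPDFReal_mul_gaussianPDFReal_polar]
  rw [← ofReal_integral_eq_lintegral_ofReal, integral_const_mul,
    ← integral_Ioc_eq_integral_Ioo, ← intervalIntegral.integral_of_le (by linarith [Real.pi_pos])]
  · congr 2
    simpa only [show -π + 2 * π = π by ring] using hperiodic.intervalIntegral_comp_sub_eq (-π) φ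
  · exact (Continuous.integrableOn_Icc (by fun_prop)).mono_set Ioo_subset_Icc_self
  · exact Filter.Eventually.of_forall fun θ => by positivity

/-- The radial part d = √(Z²+W²) of a bivariate normal vector with independent
equal-variance coordinates has the Rice(ν, σ) density with respect to Lebesgue measure on
(0, ∞), with the modified Bessel function written explicitly. -/
theorem stmt_1
    (σ μz μw : ℝ) (hσ : 0 < σ)
    (ν : ℝ) (hν : ν = Real.sqrt (μz^2 + μw^2))
    (Ω : Type*) [MeasurableSpace Ω] (P : Measure Ω) [IsProbabilityMeasure P]
    (Z W : Ω → ℝ) (hZm : Measurable Z) (hWm : Measurable W)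
    (hZW : IndepFun Z W P)
    (hZ : Measure.map Z P = gaussianReal μz ⟨σ^2, sq_nonneg σ⟩)
    (hW : Measure.map W P = gaussianReal μw ⟨σ^2, sq_nonneg σ⟩) :
    Measure.map (fun ω => Real.sqrt ((Z ω)^2 + (W ω)^2)) P
      = (volume.restrict (Ioi (0:ℝ))).withDensity
          (fun s => ENNReal.ofReal ((s / (2*π*σ^2)) * Real.exp (-((s^2 + ν^2)/(2*σ^2))) *
            ∫ u in (-π)..π, Real.exp ((s*ν/σ^2) * Real.cos u))) := by
  set v : ℝ≥0 := ⟨σ ^ 2, sq_nonneg σ⟩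
  have hvσ : (v : ℝ) = σ ^ 2 := rfl
  have hv : v ≠ 0 := by
    rw [ne_eq, ← NNReal.coe_eq_zero, hvσ]
    positivity
  obtain ⟨φ, hμz, hμw⟩ := exists_eq_sqrt_mul_cos_sin μz μw
  rw [← hν] at hμz hμw
  have hjoint : P.map (fun ω => (Z ω, W ω))
      = volume.withDensity (fun p => gaussianPDF μz v p.1 * gaussianPDF μw v p.2) := by
    rw [hZW.map_prod_eq_prod_map_map hZm.aemeasurable hWm.aemeasurable, hZ, hW,
      gaussianReal_of_var_ne_zero _ hv, gaussianReal_of_var_ne_zero _ hv,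
      prod_withDensity (measurable_gaussianPDF _ _) (measurable_gaussianPDF _ _),
      Measure.volume_eq_prod]
  calc P.map (fun ω => √(Z ω ^ 2 + W ω ^ 2))
      = (P.map (fun ω => (Z ω, W ω))).map (fun p => √(p.1 ^ 2 + p.2 ^ 2)) :=
        (Measure.map_map (by fun_prop : Measurable fun p : ℝ × ℝ => √(p.1 ^ 2 + p.2 ^ 2))
          (hZm.prodMk hWm)).symm
    _ = _ := by rw [hjoint, map_sqrt_sq_add_sq_withDensity (by fun_prop)]
    _ = _ := by
      refine withDensity_congr_ae (ae_restrict_of_forall_mem measurableSet_Ioi fun s hs => ?_)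
      dsimp only
      rw [hμz, hμw, lintegral_gaussianPDF_mul_gaussianPDF_polar, ← ENNReal.ofReal_mul hs.le]
      congr 1
      rw [hvσ]
      ring
end

section
/- Let σ > 0 and (μ_z, μ_w) ∈ ℝ² with (μ_z, μ_w) ≠ (0, 0), let ν = √(μ_z² + μ_w²) and θ₀ = atan2(μ_w, μ_z). Define for s > 0 and θ ∈ (−π, π] the joint polar density f(s, θ) = (s / (2πσ²)) · exp(−((s·cos θ − μ_z)² + (s·sin θ − μ_w)²) / (2σ²)) and the radial density f_d(s) = (s / (2πσ²)) · exp(−(s² + ν²)/(2σ²)) · ∫_{−π}^{π} exp((sν/σ²) cos u) du. Then for all s > 0 and θ ∈ (−π, π], f(s, θ) = f_d(s) · exp((sν/σ²) · cos(θ − θ₀)) / ∫_{−π}^{π} exp((sν/σ²) · cos u) du; that is, the conditional density of the angle given the radius s is the von Mises density with concentration sν/σ² and mean direction θ₀. -/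
open MeasureTheory Set
open scoped Real

/-!
Writing the mean as `ν e^{iθ₀}`, the law of cosines turns the exponent of the joint density
into `-(s² + ν²)/(2σ²) + (sν/σ²) cos (θ - θ₀)`. The first summand only depends on the radius;
the second is the von Mises kernel, whose normalising integral is positive and cancels.
-/

theorem Complex.law_cos_polar (z : ℂ) (s θ : ℝ) :
    (s * Real.cos θ - z.re) ^ 2 + (s * Real.sin θ - z.im) ^ 2
      = s ^ 2 + ‖z‖ ^ 2 - 2 * s * ‖z‖ * Real.cos (θ - arg z) := by
  rw [Real.cos_sub, ← norm_mul_cos_arg z, ← norm_mul_sin_arg z]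
  linear_combination s ^ 2 * Real.sin_sq_add_cos_sq θ + ‖z‖ ^ 2 * Real.sin_sq_add_cos_sq (arg z)

theorem integral_exp_mul_cos_pos (κ : ℝ) : 0 < ∫ u in (-π)..π, Real.exp (κ * Real.cos u) :=
  intervalIntegral.intervalIntegral_pos_of_pos
    ((by fun_prop : Continuous fun u ↦ Real.exp (κ * Real.cos u)).intervalIntegrable _ _)
    (fun _ ↦ Real.exp_pos _) (by linarith [Real.pi_pos])

theorem stmt_2_general
    (σ μz μw : ℝ)
    (ν θ₀ : ℝ) (hν : ν = Real.sqrt (μz^2 + μw^2))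
    (hθ₀ : θ₀ = Complex.arg (μz + μw * Complex.I)) :
    ∀ s > (0:ℝ), ∀ θ ∈ Ioc (-π) π,
      (s / (2*π*σ^2)) *
          Real.exp (-(((s * Real.cos θ - μz)^2 + (s * Real.sin θ - μw)^2) / (2*σ^2)))
        = ((s / (2*π*σ^2)) * Real.exp (-((s^2 + ν^2)/(2*σ^2))) *
              ∫ u in (-π)..π, Real.exp ((s*ν/σ^2) * Real.cos u))
            * Real.exp ((s*ν/σ^2) * Real.cos (θ - θ₀))
            / ∫ u in (-π)..π, Real.exp ((s*ν/σ^2) * Real.cos u) := by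
  intro s _ θ _
  have hlaw : (s * Real.cos θ - μz)^2 + (s * Real.sin θ - μw)^2
      = s^2 + ν^2 - 2*s*ν * Real.cos (θ - θ₀) := by
    simpa [hν, hθ₀, Complex.norm_add_mul_I] using
      Complex.law_cos_polar (μz + μw * Complex.I) s θ
  have hexponent : -(((s * Real.cos θ - μz)^2 + (s * Real.sin θ - μw)^2) / (2*σ^2))
      = -((s^2 + ν^2)/(2*σ^2)) + (s*ν/σ^2) * Real.cos (θ - θ₀) := by
    rw [hlaw]
    field_simp
    ring
  rw [hexponent, Real.exp_add, eq_div_iff (integral_exp_mul_cos_pos _).ne']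
  ring

/-- the joint polar density factorizes as the Rice radial density times the
von Mises angular density with concentration sν/σ² and mean direction θ₀ = atan2(μ_w, μ_z). -/
theorem stmt_2
    (σ μz μw : ℝ) (hσ : 0 < σ) (hμ : (μz, μw) ≠ (0, 0))
    (ν θ₀ : ℝ) (hν : ν = Real.sqrt (μz^2 + μw^2))
    (hθ₀ : θ₀ = Complex.arg (μz + μw * Complex.I)) :
    ∀ s > (0:ℝ), ∀ θ ∈ Ioc (-π) π,
      (s / (2*π*σ^2)) *
          Real.exp (-(((s * Real.cos θ - μz)^2 + (s * Real.sin θ - μw)^2) / (2*σ^2)))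
        = ((s / (2*π*σ^2)) * Real.exp (-((s^2 + ν^2)/(2*σ^2))) *
              ∫ u in (-π)..π, Real.exp ((s*ν/σ^2) * Real.cos u))
            * Real.exp ((s*ν/σ^2) * Real.cos (θ - θ₀))
            / ∫ u in (-π)..π, Real.exp ((s*ν/σ^2) * Real.cos u) :=
  stmt_2_general σ μz μw ν θ₀ hν hθ₀
end

section
/- Let T ≥ 2 be an integer, λ > 0, and p₀ ∈ (0, 1). Let (S, 𝒮, ρ) be a probability space carrying measurable maps ξ₁, …, ξ_T : S → ℝ² (the latent positions of the influenced actor), Θ₂, …, Θ_T : S → ℝ (the angles toward the influencing actor), and Σ² : S → (0, ∞) (the transition variance). For ν ≥ 0 define the likelihood ratio L(ν) = ∫_S exp( (ν/Σ²) · ∑_{t=2}^{T} ⟨ξ_t − ξ_{t−1}, (cos Θ_t, sin Θ_t)⟩ − (T−1)·ν²/(2Σ²) ) dρ. Define on S the quantities z = ( (1/(T−1)) ∑_{t=2}^{T} ⟨ξ_t − ξ_{t−1}, (cos Θ_t, sin Θ_t)⟩ − Σ²/(λ(T−1)) ) / √(Σ²/(T−1)) and h = ((1−p₀)/(λ p₀))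 · Φ(z) / ( √((T−1)/Σ²) · φ(z) ). Then, as an identity in [0, ∞], ∫₀^∞ ((1−p₀)/(λ p₀)) · e^{−ν/λ} · L(ν) dν = ∫_S h dρ, where φ(z) = (1/√(2π)) e^{−z²/2} is the standard normal density and Φ(z) = ∫_{−∞}^{z} φ(t) dt is the standard normal cumulative distribution function. -/
open MeasureTheory Set
open scoped Real ENNReal

/-!
By Tonelli, integrate over `ν` first for each fixed sample `s`. The exponent is quadratic in `ν`;
completing the square turns the integrand into `exp (z² / 2)` times a Gaussian in `ν` of precision
`a = (T - 1) / σ²` centred at `m = z / √a`, whose integral over `(0, ∞)` is `√(2π / a) Φ(z)`.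
-/

theorem integral_comp_sub_right_Ioi {E : Type*} [NormedAddCommGroup E] [NormedSpace ℝ E]
    (f : ℝ → E) (a m : ℝ) : ∫ x in Ioi a, f (x - m) = ∫ x in Ioi (a - m), f x := by
  simpa using (measurePreserving_sub_right volume m).setIntegral_preimage_emb
    (measurableEmbedding_subRight m) f (Ioi (a - m))

theorem integral_Ioi_exp_neg_mul_sq_sub {a : ℝ} (ha : 0 < a) (m : ℝ) :
    ∫ ν in Ioi 0, Real.exp (-(a / 2) * (ν - m) ^ 2)
      = (√a)⁻¹ * ∫ t in Iic (√a * m), Real.exp (-t ^ 2 / 2) := by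
  have hsq : ∀ x, Real.exp (-(a / 2) * x ^ 2) = Real.exp (-(√a * x) ^ 2 / 2) := fun x => by
    rw [mul_pow, Real.sq_sqrt ha.le]; ring_nf
  calc ∫ ν in Ioi 0, Real.exp (-(a / 2) * (ν - m) ^ 2)
      = ∫ x in Ioi (0 - m), Real.exp (-(√a * x) ^ 2 / 2) := by
        simp_rw [← hsq]
        exact integral_comp_sub_right_Ioi (fun x => Real.exp (-(a / 2) * x ^ 2)) 0 m
    _ = (√a)⁻¹ * ∫ t in Ioi (-(√a * m)), Real.exp (-(-t) ^ 2 / 2) := by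
        rw [integral_comp_mul_left_Ioi (fun t => Real.exp (-t ^ 2 / 2)) _ (Real.sqrt_pos.2 ha)]
        simp [smul_eq_mul]
    _ = (√a)⁻¹ * ∫ t in Iic (√a * m), Real.exp (-t ^ 2 / 2) := by
        rw [integral_comp_neg_Ioi (-(√a * m)) fun t => Real.exp (-t ^ 2 / 2), neg_neg]

-- Also valid at `lam = 0`, where `-ν / lam` and `σ2 / (lam * n)` both vanish.
theorem exponent_complete_square (lam P ν : ℝ) {n σ2 : ℝ} (hn : n ≠ 0) (hσ2 : σ2 ≠ 0) :
    -ν / lam + (ν / σ2 * P - n * ν ^ 2 / (2 * σ2))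
      = n / σ2 * (P / n - σ2 / (lam * n)) ^ 2 / 2
        - n / σ2 / 2 * (ν - (P / n - σ2 / (lam * n))) ^ 2 := by
  simp only [div_eq_mul_inv, mul_inv]
  field_simp
  ring

theorem lintegral_Ioi_exp_mul_exp_quadratic (lam P : ℝ) {n σ2 : ℝ}
    (hn : 0 < n) (hσ2 : 0 < σ2) {z : ℝ} (hz : z = (P / n - σ2 / (lam * n)) / √(σ2 / n)) :
    ∫⁻ ν in Ioi 0, ENNReal.ofReal
        (Real.exp (-ν / lam) * Real.exp ((ν / σ2) * P - n * ν ^ 2 / (2 * σ2)))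
      = ENNReal.ofReal ((∫ t in Iic z, (√(2 * π))⁻¹ * Real.exp (-(t ^ 2) / 2))
          / (√(n / σ2) * ((√(2 * π))⁻¹ * Real.exp (-(z ^ 2) / 2)))) := by
  set a := n / σ2 with ha_def
  set m := P / n - σ2 / (lam * n) with hm_def
  have ha : 0 < a := div_pos hn hσ2
  have hz' : z = √a * m := by
    rw [hz, ← inv_div n σ2, Real.sqrt_inv, div_inv_eq_mul, mul_comm]
  have hsquare : ∀ ν, Real.exp (-ν / lam) * Real.exp ((ν / σ2) * P - n * ν ^ 2 / (2 * σ2))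
      = Real.exp (z ^ 2 / 2) * Real.exp (-(a / 2) * (ν - m) ^ 2) := fun ν => by
    rw [← Real.exp_add, ← Real.exp_add, exponent_complete_square lam P ν hn.ne' hσ2.ne',
      ← ha_def, ← hm_def, hz', mul_pow, Real.sq_sqrt ha.le]
    ring_nf
  have hint : Integrable fun ν => Real.exp (z ^ 2 / 2) * Real.exp (-(a / 2) * (ν - m) ^ 2) :=
    ((integrable_exp_neg_mul_sq (by positivity)).comp_sub_right m).const_mul _
  simp_rw [hsquare]
  rw [← ofReal_integral_eq_lintegral_ofReal hint.integrableOn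
      (ae_of_all _ fun ν => by positivity),
    integral_const_mul, integral_Ioi_exp_neg_mul_sq_sub ha, ← hz', integral_const_mul]
  rw [neg_div, Real.exp_neg]
  field_simp

theorem stmt_6_general (T : ℕ) (hT : 2 ≤ T) (lam p₀ : ℝ)
    (S : Type*) [MeasurableSpace S] (ρ : Measure S) [IsProbabilityMeasure ρ]
    (ξ : ℕ → S → ℝ × ℝ) (Θ : ℕ → S → ℝ) (sig2 : S → ℝ)
    (hξ : ∀ t, Measurable (ξ t)) (hΘ : ∀ t, Measurable (Θ t)) (hsig2 : Measurable sig2)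
    (hsig2pos : ∀ s, 0 < sig2 s)
    (proj : S → ℝ)
    (hproj : ∀ s, proj s = ∑ t ∈ Finset.Icc 2 T,
        (((ξ t s).1 - (ξ (t-1) s).1) * Real.cos (Θ t s)
          + ((ξ t s).2 - (ξ (t-1) s).2) * Real.sin (Θ t s)))
    (z h : S → ℝ)
    (hz : ∀ s, z s = (proj s / ((T:ℝ) - 1) - sig2 s / (lam * ((T:ℝ) - 1)))
        / Real.sqrt (sig2 s / ((T:ℝ) - 1)))
    (hh : ∀ s, h s = ((1 - p₀)/(lam * p₀)) *
        (∫ t in Iic (z s), (Real.sqrt (2*π))⁻¹ * Real.exp (-(t^2)/2))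
        / (Real.sqrt (((T:ℝ) - 1) / sig2 s)
            * ((Real.sqrt (2*π))⁻¹ * Real.exp (-((z s)^2)/2)))) :
    ∫⁻ ν in Ioi (0:ℝ), ENNReal.ofReal (((1 - p₀)/(lam * p₀)) * Real.exp (-ν/lam)) *
        ∫⁻ s, ENNReal.ofReal
          (Real.exp ((ν / sig2 s) * proj s - ((T:ℝ) - 1) * ν^2 / (2 * sig2 s))) ∂ρ
      = ∫⁻ s, ENNReal.ofReal (h s) ∂ρ := by
  have hn : (0 : ℝ) < T - 1 := by
    have : (2 : ℝ) ≤ T := by exact_mod_cast hT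
    linarith
  have hproj_meas : Measurable proj := by
    rw [show proj = _ from funext hproj]
    fun_prop
  set c := (1 - p₀) / (lam * p₀)
  calc _ = ∫⁻ ν in Ioi 0, ∫⁻ s, ENNReal.ofReal c * ENNReal.ofReal (Real.exp (-ν / lam) *
          Real.exp ((ν / sig2 s) * proj s - ((T:ℝ) - 1) * ν ^ 2 / (2 * sig2 s))) ∂ρ := by
        refine lintegral_congr fun ν => ?_
        rw [← lintegral_const_mul' _ _ ENNReal.ofReal_ne_top]
        refine lintegral_congr fun s => ?_
        rw [← ENNReal.ofReal_mul' (by positivity), mul_assoc,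
          ENNReal.ofReal_mul' (by positivity)]
    _ = ∫⁻ s, (∫⁻ ν in Ioi 0, ENNReal.ofReal c * ENNReal.ofReal (Real.exp (-ν / lam) *
          Real.exp ((ν / sig2 s) * proj s - ((T:ℝ) - 1) * ν ^ 2 / (2 * sig2 s)))) ∂ρ :=
        lintegral_lintegral_swap (by fun_prop)
    _ = ∫⁻ s, ENNReal.ofReal (h s) ∂ρ := by
        refine lintegral_congr fun s => ?_
        rw [lintegral_const_mul' _ _ ENNReal.ofReal_ne_top,
          lintegral_Ioi_exp_mul_exp_quadratic lam (proj s) hn (hsig2pos s) (hz s),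
          ← ENNReal.ofReal_mul' (by positivity), hh s, mul_div_assoc]

/-- Proposition 1: as an identity in [0, ∞],
∫₀^∞ ((1−p₀)/(λp₀)) e^{−ν/λ} L(ν) dν = ∫_S h dρ, where L(ν) is the posterior expectation of
the Gaussian transition-density likelihood ratio and h is the closed-form expression involving
the standard normal density φ and cdf Φ. -/
theorem stmt_6 (T : ℕ) (hT : 2 ≤ T) (lam p₀ : ℝ) (hlam : 0 < lam) (hp₀ : p₀ ∈ Ioo (0:ℝ) 1)
    (S : Type*) [MeasurableSpace S] (ρ : Measure S) [IsProbabilityMeasure ρ]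
    (ξ : ℕ → S → ℝ × ℝ) (Θ : ℕ → S → ℝ) (sig2 : S → ℝ)
    (hξ : ∀ t, Measurable (ξ t)) (hΘ : ∀ t, Measurable (Θ t)) (hsig2 : Measurable sig2)
    (hsig2pos : ∀ s, 0 < sig2 s)
    (proj : S → ℝ)
    (hproj : ∀ s, proj s = ∑ t ∈ Finset.Icc 2 T,
        (((ξ t s).1 - (ξ (t-1) s).1) * Real.cos (Θ t s)
          + ((ξ t s).2 - (ξ (t-1) s).2) * Real.sin (Θ t s)))
    (z h : S → ℝ)
    (hz : ∀ s, z s = (proj s / ((T:ℝ) - 1) - sig2 s / (lam * ((T:ℝ) - 1)))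
        / Real.sqrt (sig2 s / ((T:ℝ) - 1)))
    (hh : ∀ s, h s = ((1 - p₀)/(lam * p₀)) *
        (∫ t in Iic (z s), (Real.sqrt (2*π))⁻¹ * Real.exp (-(t^2)/2))
        / (Real.sqrt (((T:ℝ) - 1) / sig2 s)
            * ((Real.sqrt (2*π))⁻¹ * Real.exp (-((z s)^2)/2)))) :
    ∫⁻ ν in Ioi (0:ℝ), ENNReal.ofReal (((1 - p₀)/(lam * p₀)) * Real.exp (-ν/lam)) *
        ∫⁻ s, ENNReal.ofReal
          (Real.exp ((ν / sig2 s) * proj s - ((T:ℝ) - 1) * ν^2 / (2 * sig2 s))) ∂ρ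
      = ∫⁻ s, ENNReal.ofReal (h s) ∂ρ :=
  stmt_6_general T hT lam p₀ S ρ ξ Θ sig2 hξ hΘ hsig2 hsig2pos proj hproj z h hz hh
end
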